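/- arXiv:1507.03878 — 5 statements merged into one kernel-verified Lean document; each statement's English description precedes it below -/
import Mathlib

section
/- For every integer n ≥ 4, one has f(n)/2 − f(n−1) + f(n−2)/2 = 1/12. (This is the combinatorial identity underlying the computation of the Euler characteristic of the link of the tropical moduli space of genus-2 curves with n markings.) -/
/-- The set of partitions of `m` into exactly three positive parts, encoded as
triples `(k₁, k₂, k₃)` with `k₁ ≥ k₂ ≥ k₃ ≥ 1` and `k₁ + k₂ + k₃ = m`. -/
def P3 (m : ℕ) : Finset (ℕ × ℕ × ℕ) :=
  (Finset.range (m + 1) ×ˢ Finset.range (m + 1) ×ˢ Finset.range (m + 1)).filter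
    (fun p => p.2.1 ≤ p.1 ∧ p.2.2 ≤ p.2.1 ∧ 1 ≤ p.2.2 ∧ p.1 + p.2.1 + p.2.2 = m)

/-- The largest number of parts of the same size of the triple `p`. -/
def alphaP (p : ℕ × ℕ × ℕ) : ℕ :=
  if p.1 = p.2.1 ∧ p.2.1 = p.2.2 then 3
  else if p.1 = p.2.1 ∨ p.2.1 = p.2.2 ∨ p.1 = p.2.2 then 2
  else 1

/-- `f m = Σ_{p ∈ P₃(m)} 1 / α(p)!`. -/
def fP3 (m : ℕ) : ℚ := ∑ p ∈ P3 m, 1 / (alphaP p).factorial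

/-- Ordered compositions of `m` into three positive parts. -/
def C3 (m : ℕ) : Finset (ℕ × ℕ × ℕ) :=
  (Finset.range (m + 1) ×ˢ Finset.range (m + 1) ×ˢ Finset.range (m + 1)).filter
    (fun p => 1 ≤ p.1 ∧ 1 ≤ p.2.1 ∧ 1 ≤ p.2.2 ∧ p.1 + p.2.1 + p.2.2 = m)

/-- Sorting a triple in decreasing order. -/
def sort3 (q : ℕ × ℕ × ℕ) : ℕ × ℕ × ℕ :=
  (max q.1 (max q.2.1 q.2.2),
   q.1 + q.2.1 + q.2.2 - max q.1 (max q.2.1 q.2.2) - min q.1 (min q.2.1 q.2.2),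
   min q.1 (min q.2.1 q.2.2))

lemma mem_P3 {m : ℕ} {p : ℕ × ℕ × ℕ} :
    p ∈ P3 m ↔ p.2.1 ≤ p.1 ∧ p.2.2 ≤ p.2.1 ∧ 1 ≤ p.2.2 ∧ p.1 + p.2.1 + p.2.2 = m := by
  simp only [P3, Finset.mem_filter, Finset.mem_product, Finset.mem_range]
  exact ⟨fun h => by tauto, fun h => by omega⟩

lemma mem_C3 {m : ℕ} {p : ℕ × ℕ × ℕ} :
    p ∈ C3 m ↔ 1 ≤ p.1 ∧ 1 ≤ p.2.1 ∧ 1 ≤ p.2.2 ∧ p.1 + p.2.1 + p.2.2 = m := by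
  simp only [C3, Finset.mem_filter, Finset.mem_product, Finset.mem_range]
  exact ⟨fun h => by tauto, fun h => by omega⟩

lemma sort3_mem {m : ℕ} {q : ℕ × ℕ × ℕ} (hq : q ∈ C3 m) : sort3 q ∈ P3 m := by
  obtain ⟨x, y, z⟩ := q
  rw [mem_C3] at hq
  rw [mem_P3]
  simp only [sort3]
  dsimp only at hq ⊢
  omega

lemma fiber_eq_perms {m a b c : ℕ} (hba : b ≤ a) (hcb : c ≤ b) (hc : 1 ≤ c)
    (hsum : a + b + c = m) :
    (C3 m).filter (fun q => sort3 q = (a, b, c)) =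
      ({(a,b,c),(a,c,b),(b,a,c),(b,c,a),(c,a,b),(c,b,a)} : Finset (ℕ × ℕ × ℕ)) := by
  ext ⟨x, y, z⟩
  simp only [Finset.mem_filter, mem_C3, Finset.mem_insert, Finset.mem_singleton,
    Prod.mk.injEq, sort3]
  constructor
  · rintro ⟨⟨hx, hy, hz, hs⟩, h1, h2, h3⟩
    have ha : (a = x ∨ a = y ∨ a = z) ∧ x ≤ a ∧ y ≤ a ∧ z ≤ a := by omega
    have hc' : (c = x ∨ c = y ∨ c = z) ∧ c ≤ x ∧ c ≤ y ∧ c ≤ z := by omega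
    rw [h1, h3] at h2
    clear h1 h3
    obtain ⟨ha1, ha2, ha3, ha4⟩ := ha
    obtain ⟨hc1, hc2, hc3, hc4⟩ := hc'
    rcases ha1 with rfl | rfl | rfl <;> rcases hc1 with h | h | h <;> omega
  · intro h
    omega

lemma fiber_card {m : ℕ} {p : ℕ × ℕ × ℕ} (hp : p ∈ P3 m) :
    (((C3 m).filter (fun q => sort3 q = p)).card : ℚ) = 6 * (1 / (alphaP p).factorial) := by
  obtain ⟨a, b, c⟩ := p
  rw [mem_P3] at hp
  obtain ⟨hba, hcb, hc, hsum⟩ := hp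
  replace hba : b ≤ a := hba
  replace hcb : c ≤ b := hcb
  replace hc : 1 ≤ c := hc
  replace hsum : a + b + c = m := hsum
  rw [fiber_eq_perms hba hcb hc hsum]
  by_cases hab : a = b <;> by_cases hbc : b = c
  · subst hab; subst hbc
    have : ({(a,a,a),(a,a,a),(a,a,a),(a,a,a),(a,a,a),(a,a,a)} : Finset (ℕ × ℕ × ℕ))
        = {(a,a,a)} := by simp
    rw [this, Finset.card_singleton]
    norm_num [alphaP, Nat.factorial]
  · subst hab
    have hlt : c < a := by omega
    have : ({(a,a,c),(a,c,a),(a,a,c),(a,c,a),(c,a,a),(c,a,a)} : Finset (ℕ × ℕ × ℕ))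
        = {(a,a,c),(a,c,a),(c,a,a)} := by
      ext q; simp only [Finset.mem_insert, Finset.mem_singleton]; tauto
    rw [this]
    rw [Finset.card_insert_of_notMem (by simp [Prod.mk.injEq]; omega),
      Finset.card_insert_of_notMem (by simp [Prod.mk.injEq]; omega),
      Finset.card_singleton]
    have : alphaP (a, a, c) = 2 := by
      simp only [alphaP]
      rw [if_neg (by simp; omega), if_pos (by simp)]
    rw [this]
    norm_num [Nat.factorial]
  · subst hbc
    have hlt : b < a := by omega
    have : ({(a,b,b),(a,b,b),(b,a,b),(b,b,a),(b,a,b),(b,b,a)} : Finset (ℕ × ℕ × ℕ))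
        = {(a,b,b),(b,a,b),(b,b,a)} := by
      ext q; simp only [Finset.mem_insert, Finset.mem_singleton]; tauto
    rw [this]
    rw [Finset.card_insert_of_notMem (by simp [Prod.mk.injEq]; omega),
      Finset.card_insert_of_notMem (by simp [Prod.mk.injEq]; omega),
      Finset.card_singleton]
    have : alphaP (a, b, b) = 2 := by
      simp only [alphaP]
      rw [if_neg (by simp; omega), if_pos (by simp)]
    rw [this]
    norm_num [Nat.factorial]
  · have h1 : c < b := by omega
    have h2 : b < a := by omega
    rw [Finset.card_insert_of_notMem (by simp [Prod.mk.injEq]; omega),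
      Finset.card_insert_of_notMem (by simp [Prod.mk.injEq]; omega),
      Finset.card_insert_of_notMem (by simp [Prod.mk.injEq]; omega),
      Finset.card_insert_of_notMem (by simp [Prod.mk.injEq]; omega),
      Finset.card_insert_of_notMem (by simp [Prod.mk.injEq]; omega),
      Finset.card_singleton]
    have : alphaP (a, b, c) = 1 := by
      simp only [alphaP]
      rw [if_neg (by simp; omega), if_neg (by simp; omega)]
    rw [this]
    norm_num [Nat.factorial]

lemma card_C3_eq_fP3 (m : ℕ) : ((C3 m).card : ℚ) = 6 * fP3 m := by
  rw [Finset.card_eq_sum_card_fiberwise (fun q hq => sort3_mem (m := m) hq)]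
  push_cast
  rw [Finset.sum_congr rfl (fun p hp => fiber_card hp)]
  rw [fP3, Finset.mul_sum]

lemma card_fiber_first {m a : ℕ} (ha : 1 ≤ a) :
    ((C3 m).filter (fun q => q.1 = a)).card = m - a - 1 := by
  rw [show m - a - 1 = (Finset.range (m - a - 1)).card by rw [Finset.card_range]]
  apply Finset.card_nbij' (fun q => q.2.1 - 1) (fun b => (a, b + 1, m - a - b - 1))
  · intro q hq
    simp only [Finset.mem_coe, Finset.mem_filter, mem_C3] at hq
    simp only [Finset.mem_coe, Finset.mem_range]
    omega
  · intro b hb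
    simp only [Finset.mem_coe, Finset.mem_range] at hb
    simp only [Finset.mem_coe, Finset.mem_filter, mem_C3]
    refine ⟨⟨?_, ?_, ?_, ?_⟩, trivial⟩ <;> omega
  · intro q hq
    simp only [Finset.mem_coe, Finset.mem_filter, mem_C3] at hq
    obtain ⟨⟨h1, h2, h3, h4⟩, h5⟩ := hq
    obtain ⟨x, y, z⟩ := q
    replace h5 : x = a := h5
    replace h1 : 1 ≤ x := h1
    replace h2 : 1 ≤ y := h2
    replace h3 : 1 ≤ z := h3
    replace h4 : x + y + z = m := h4
    simp only [Prod.mk.injEq]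
    refine ⟨by omega, by omega, by omega⟩
  · intro b hb
    simp only [Finset.mem_coe, Finset.mem_range] at hb
    simp only
    omega

lemma card_C3 (k : ℕ) : (C3 (k + 2)).card * 2 = k * (k + 1) := by
  have h0 : ∀ q ∈ C3 (k + 2), q.1 ∈ Finset.range (k + 3) := by
    intro q hq
    rw [mem_C3] at hq
    simp only [Finset.mem_range]
    omega
  rw [Finset.card_eq_sum_card_fiberwise h0]
  rw [Finset.sum_range_succ']
  have hz : ((C3 (k + 2)).filter (fun q => q.1 = 0)).card = 0 := by
    rw [Finset.card_eq_zero, Finset.eq_empty_iff_forall_notMem]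
    intro q hq
    simp only [Finset.mem_filter, mem_C3] at hq
    omega
  rw [hz, add_zero]
  have hcongr : ∀ i ∈ Finset.range (k + 2),
      ((C3 (k + 2)).filter (fun q => q.1 = i + 1)).card = k - i := by
    intro i _
    rw [card_fiber_first (by omega)]
    omega
  rw [Finset.sum_congr rfl hcongr]
  have : ∑ i ∈ Finset.range (k + 2), (k - i) = ∑ i ∈ Finset.range (k + 1), (k - i) := by
    rw [Finset.sum_range_succ]
    omega
  rw [this]
  have hre := Finset.sum_range_reflect (fun j => j) (k + 1)
  simp only [Nat.add_sub_cancel] at hre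
  rw [hre, Finset.sum_range_id_mul_two]
  simp only [Nat.add_sub_cancel]
  ring

lemma fP3_closed (k : ℕ) : fP3 (k + 2) = (k : ℚ) * (k + 1) / 12 := by
  have h1 := card_C3_eq_fP3 (k + 2)
  have h2 := card_C3 k
  have h3 : ((C3 (k + 2)).card : ℚ) * 2 = (k : ℚ) * (k + 1) := by
    exact_mod_cast congrArg (Nat.cast : ℕ → ℚ) h2
  rw [h1] at h3
  linarith

theorem euler_char_identity (n : ℕ) (hn : 4 ≤ n) :
    fP3 n / 2 - fP3 (n - 1) + fP3 (n - 2) / 2 = 1 / 12 := by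
  obtain ⟨j, rfl⟩ : ∃ j, n = j + 4 := ⟨n - 4, by omega⟩
  rw [show j + 4 - 1 = (j + 1) + 2 from by omega, show j + 4 - 2 = j + 2 from by omega]
  have c1 := fP3_closed (j + 2)
  rw [show j + 2 + 2 = j + 4 from by omega] at c1
  rw [c1, fP3_closed (j + 1), fP3_closed j]
  push_cast
  ring
end

section
/- Let k ≥ 1 be an integer. Let C be the k × k integer matrix with C(i, i+1) = (−1)^k for 1 ≤ i ≤ k−1, C(k, 1) = −1, and all other entries 0 (so for k = 1, C is the 1 × 1 matrix (−1)). Let M be the 2k × 2k integer block matrix M = [[(−1)^{k+1}·I_k, I_k], [I_k, C]], where I_k is the k × k identity matrix. Then det M = 2·(−1)^k. -/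
lemma det_bidiag_corner (m : ℕ) (a x : ℤ) :
    (Matrix.of fun i j : Fin (m + 2) =>
      (if (i : ℕ) + 1 = (j : ℕ) then a
        else if (i : ℕ) = m + 1 ∧ (j : ℕ) = 0 then x else 0)
      + (if i = j then a else 0)).det
    = a ^ (m + 2) + (-1 : ℤ) ^ (m + 1) * x * a ^ (m + 1) := by
  set M : Matrix (Fin (m+2)) (Fin (m+2)) ℤ := Matrix.of fun i j : Fin (m + 2) =>
      (if (i : ℕ) + 1 = (j : ℕ) then a
        else if (i : ℕ) = m + 1 ∧ (j : ℕ) = 0 then x else 0)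
      + (if i = j then a else 0) with hM
  rw [Matrix.det_succ_column_zero]
  rw [Finset.sum_eq_add (0 : Fin (m+2)) (Fin.last (m+1)) (by simp [Fin.ext_iff])
    (fun c _ hc => ?_) (by simp) (by simp)]
  · -- the two remaining terms
    have h1 : (M.submatrix (Fin.succAbove 0) Fin.succ).det = a ^ (m+1) := by
      rw [Fin.succAbove_zero, Matrix.det_of_upperTriangular]
      · rw [Finset.prod_congr rfl (fun i _ => ?_), Finset.prod_const, Finset.card_univ,
          Fintype.card_fin]
        simp only [hM, Matrix.submatrix_apply, Matrix.of_apply, Fin.ext_iff, Fin.val_succ,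
          Nat.succ_ne_zero, and_false, if_false]
        split_ifs <;> (first | ring1 | (exfalso; omega))
      · intro i j hij
        simp only [id_eq, Fin.lt_iff_val_lt_val] at hij
        simp only [hM, Matrix.submatrix_apply, Matrix.of_apply, Fin.ext_iff, Fin.val_succ,
          Nat.succ_ne_zero, and_false, if_false]
        split_ifs <;> (first | ring1 | (exfalso; omega))
    have h2 : (M.submatrix (Fin.last (m+1)).succAbove Fin.succ).det = a ^ (m+1) := by
      rw [Fin.succAbove_last, Matrix.det_of_lowerTriangular]
      · rw [Finset.prod_congr rfl (fun i _ => ?_), Finset.prod_const, Finset.card_univ,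
          Fintype.card_fin]
        simp only [hM, Matrix.submatrix_apply, Matrix.of_apply, Fin.ext_iff, Fin.val_succ,
          Fin.coe_castSucc, Nat.succ_ne_zero, and_false, if_false]
        split_ifs <;> (first | ring1 | (exfalso; omega))
      · intro i j hij
        have hij' : (i : ℕ) < (j : ℕ) := hij
        have hi : (i : ℕ) < m + 1 := i.isLt
        simp only [hM, Matrix.submatrix_apply, Matrix.of_apply, Fin.ext_iff, Fin.val_succ,
          Fin.coe_castSucc, Nat.succ_ne_zero, and_false, if_false]
        split_ifs <;> (first | ring1 | (exfalso; omega))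
    have hM0 : M 0 0 = a := by simp [hM]
    have hMl : M (Fin.last (m+1)) 0 = x := by
      rw [hM, Matrix.of_apply,
        if_neg (by simp only [Fin.val_last, Fin.val_zero]; omega),
        if_pos (by refine ⟨?_, ?_⟩ <;> simp),
        if_neg (by rw [Fin.ext_iff]; simp only [Fin.val_last, Fin.val_zero]; omega), add_zero]
    rw [h1, h2, hM0, hMl]
    simp [Fin.val_last]
    ring
  · -- middle terms vanish
    have hc0 : (c : ℕ) ≠ 0 := fun h => hc.1 (Fin.ext h)
    have hcl : (c : ℕ) ≠ m + 1 := fun h => hc.2 (Fin.ext h)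
    have : M c 0 = 0 := by
      simp [hM]
      omega
    simp [this]

/-- The determinant of the block matrix `[[(-1)^(k+1)·I, I], [I, C]]`, where `C`
is the `k × k` matrix with `C (i, i+1) = (-1)^k` for `1 ≤ i ≤ k-1`,
`C (k, 1) = -1` and all other entries `0` (indices written `1, …, k`,
here implemented with `Fin k`, i.e. indices `0, …, k-1`), equals `2·(-1)^k`. -/
theorem det_block_matrix (k : ℕ) (hk : 1 ≤ k) :
    (Matrix.fromBlocks
      ((-1 : ℤ) ^ (k + 1) • (1 : Matrix (Fin k) (Fin k) ℤ))
      (1 : Matrix (Fin k) (Fin k) ℤ)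
      (1 : Matrix (Fin k) (Fin k) ℤ)
      (Matrix.of fun i j : Fin k =>
        if (i : ℕ) + 1 = (j : ℕ) then (-1 : ℤ) ^ k
        else if (i : ℕ) = k - 1 ∧ (j : ℕ) = 0 then -1
        else 0)).det = 2 * (-1 : ℤ) ^ k := by
  set A : Matrix (Fin k) (Fin k) ℤ := (-1 : ℤ) ^ (k + 1) • 1 with hA
  set D : Matrix (Fin k) (Fin k) ℤ := Matrix.of fun i j : Fin k =>
        if (i : ℕ) + 1 = (j : ℕ) then (-1 : ℤ) ^ k
        else if (i : ℕ) = k - 1 ∧ (j : ℕ) = 0 then -1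
        else 0 with hD
  have hsq : A * A = 1 := by
    rw [hA, smul_mul_smul_comm, one_mul, ← pow_add,
      Even.neg_one_pow ⟨k + 1, rfl⟩, one_smul]
  haveI : Invertible A := ⟨A, hsq, hsq⟩
  have hinv : ⅟A = A := invOf_eq_right_inv hsq
  have hdetA : A.det = 1 := by
    rw [hA, Matrix.det_smul, Matrix.det_one, mul_one, ← pow_mul, Fintype.card_fin,
      Even.neg_one_pow (by simpa [Nat.mul_comm] using Nat.even_mul_succ_self k)]
  have hsub : D - 1 * ⅟A * 1 = Matrix.of (fun i j : Fin k =>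
      (if (i : ℕ) + 1 = (j : ℕ) then (-1 : ℤ) ^ k
        else if (i : ℕ) = k - 1 ∧ (j : ℕ) = 0 then -1 else 0)
      + (if i = j then (-1 : ℤ) ^ k else 0)) := by
    rw [hinv, one_mul, mul_one]
    ext i j
    simp only [Matrix.sub_apply, hD, hA, Matrix.smul_apply, Matrix.one_apply,
      Matrix.of_apply, smul_eq_mul, pow_succ]
    split_ifs <;> ring
  rw [Matrix.det_fromBlocks₁₁, hdetA, one_mul, hsub]
  obtain ⟨m, rfl⟩ : ∃ m, k = m + 1 := ⟨k - 1, (Nat.succ_pred_eq_of_pos hk).symm⟩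
  cases m with
  | zero =>
    rw [Matrix.det_fin_one]
    norm_num
  | succ m =>
    have := det_bidiag_corner (m := m) (a := (-1 : ℤ) ^ (m + 2)) (x := -1)
    rw [show m + 1 + 1 = m + 2 from rfl, show m + 2 - 1 = m + 1 from rfl, this]
    rcases Nat.even_or_odd m with h | h
    · simp [Even.neg_one_pow, Odd.neg_one_pow, h, pow_mul, ← pow_mul, Nat.even_add,
        Nat.odd_add, parity_simps]
    · simp [Even.neg_one_pow, Odd.neg_one_pow, h, pow_mul, ← pow_mul, Nat.even_add,
        Nat.odd_add, parity_simps]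
end

section
/- Let X be a finite type with at least 2 elements, and let σ be a permutation of X that is a cyclic permutation whose support is all of X (i.e. σ is an |X|-cycle). Let P_σ be the permutation matrix of σ over ℤ, i.e. P_σ(i, j) = 1 if i = σ(j) and 0 otherwise. Then det(I + P_σ) = 1 + sign(σ), where I is the identity matrix and sign(σ) ∈ {±1} is the signature of σ. In particular det(I + P_σ) = 2 when |X| is odd and det(I + P_σ) = 0 when |X| is even. -/
/-!
In the Leibniz expansion of `det (1 + P_σ)` the term of `τ` is `∏ i, ([τ i = i] + [τ i = σ i])`,
which is nonzero only if every `τ i` is `i` or `σ i`. Because `σ` is a single cycle through all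
of `X`, this forces `τ = 1` or `τ = σ`, so the determinant is `sign 1 + sign σ`.
-/

open Equiv Finset

namespace Equiv.Perm

variable {X : Type*} [Fintype X] [DecidableEq X] {σ : Perm X}

theorem apply_ne_self_of_support_eq_univ (hsupp : σ.support = univ) (x : X) : σ x ≠ x :=
  mem_support.mp (hsupp ▸ mem_univ x)

theorem IsCycle.of_invariant_of_mem_support {p : X → Prop} (hσ : σ.IsCycle)
    (hp : ∀ x, p x → p (σ x)) {a b : X} (ha : a ∈ σ.support) (hb : b ∈ σ.support)
    (hpa : p a) : p b := by
  obtain ⟨k, rfl⟩ := hσ.exists_pow_eq (mem_support.mp ha) (mem_support.mp hb)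
  rw [coe_pow]
  exact Function.Iterate.rec p hpa hp k

theorem IsCycle.eq_one_or_eq_of_forall_apply_eq_or_eq (hσ : σ.IsCycle)
    (hsupp : σ.support = univ) {τ : Perm X} (hτ : ∀ x, τ x = x ∨ τ x = σ x) :
    τ = 1 ∨ τ = σ := by
  by_cases h : ∃ a, τ a = σ a
  · obtain ⟨a, ha⟩ := h
    -- `τ (σ x) = σ x = τ x` is impossible, so `τ (σ x) = σ (σ x)`.
    have hinv (x : X) (hx : τ x = σ x) : τ (σ x) = σ (σ x) :=
      (hτ (σ x)).resolve_left fun h' =>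
        apply_ne_self_of_support_eq_univ hsupp x (τ.injective (h'.trans hx.symm))
    exact Or.inr <| ext fun b =>
      hσ.of_invariant_of_mem_support hinv (hsupp ▸ mem_univ a) (hsupp ▸ mem_univ b) ha
  · push Not at h
    exact Or.inl <| ext fun x => (hτ x).resolve_right (h x)

end Equiv.Perm

open Equiv.Perm

section

variable {X R : Type*} [Fintype X] [DecidableEq X] [CommRing R]

theorem prod_one_add_perm_matrix_apply {σ : Perm X} (hσ : ∀ x, σ x ≠ x) (τ : Perm X) :
    ∏ i, ((1 : Matrix X X R) + Matrix.of fun i j : X => if i = σ j then (1 : R) else 0) (τ i) i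
      = if ∀ i, τ i = i ∨ τ i = σ i then 1 else 0 := by
  split_ifs with h
  · refine prod_eq_one fun i _ => ?_
    rcases h i with h | h <;> simp [h, hσ i, (hσ i).symm]
  · push Not at h
    obtain ⟨i, hi, hi'⟩ := h
    exact prod_eq_zero (mem_univ i) (by simp [hi, hi'])

theorem det_one_add_perm_matrix_of_isCycle {σ : Perm X} (hσ : σ.IsCycle)
    (hsupp : σ.support = univ) :
    ((1 : Matrix X X R) + Matrix.of fun i j : X => if i = σ j then (1 : R) else 0).det
      = 1 + (Perm.sign σ : ℤ) := by
  have hterm (τ : Perm X) : (∀ i, τ i = i ∨ τ i = σ i) ↔ τ ∈ ({1, σ} : Finset (Perm X)) := by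
    refine ⟨fun h => ?_, fun h i => ?_⟩
    · simpa using hσ.eq_one_or_eq_of_forall_apply_eq_or_eq hsupp h
    · rcases mem_insert.mp h with rfl | h
      · simp
      · simp [mem_singleton.mp h]
  rw [Matrix.det_apply]
  simp only [prod_one_add_perm_matrix_apply (apply_ne_self_of_support_eq_univ hsupp), hterm,
    smul_ite, smul_zero]
  rw [sum_ite_mem, univ_inter, sum_pair hσ.ne_one.symm]
  simp [Units.smul_def]

end

theorem det_one_add_perm_matrix_general {X : Type*} [Fintype X] [DecidableEq X]
    (σ : Equiv.Perm X) (hc : σ.IsCycle)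
    (hsupp : σ.support = Finset.univ) :
    ((1 : Matrix X X ℤ) + Matrix.of fun i j : X => if i = σ j then (1 : ℤ) else 0).det
        = 1 + (Equiv.Perm.sign σ : ℤ) ∧
    (Odd (Fintype.card X) →
      ((1 : Matrix X X ℤ) + Matrix.of fun i j : X => if i = σ j then (1 : ℤ) else 0).det = 2) ∧
    (Even (Fintype.card X) →
      ((1 : Matrix X X ℤ) + Matrix.of fun i j : X => if i = σ j then (1 : ℤ) else 0).det = 0) := by
  have hsign : (Perm.sign σ : ℤ) = -(-1) ^ Fintype.card X := by
    rw [hc.sign, hsupp, card_univ]; push_cast; rfl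
  rw [det_one_add_perm_matrix_of_isCycle hc hsupp, hsign]
  exact ⟨rfl, fun h => by simp [h.neg_one_pow], fun h => by simp [h.neg_one_pow]⟩

/-- For an `|X|`-cycle `σ` on a finite type `X` with at least two elements, the
determinant of `I + P_σ`, where `P_σ` is the permutation matrix of `σ`, equals
`1 + sign σ`; in particular it is `2` when `|X|` is odd and `0` when `|X|` is
even. -/
theorem det_one_add_perm_matrix {X : Type*} [Fintype X] [DecidableEq X]
    (hX : 2 ≤ Fintype.card X) (σ : Equiv.Perm X) (hc : σ.IsCycle)
    (hsupp : σ.support = Finset.univ) :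
    ((1 : Matrix X X ℤ) + Matrix.of fun i j : X => if i = σ j then (1 : ℤ) else 0).det
        = 1 + (Equiv.Perm.sign σ : ℤ) ∧
    (Odd (Fintype.card X) →
      ((1 : Matrix X X ℤ) + Matrix.of fun i j : X => if i = σ j then (1 : ℤ) else 0).det = 2) ∧
    (Even (Fintype.card X) →
      ((1 : Matrix X X ℤ) + Matrix.of fun i j : X => if i = σ j then (1 : ℤ) else 0).det = 0) :=
  det_one_add_perm_matrix_general σ hc hsupp
end

section
/- Let E be a nonempty finite set. Let L and Q be two finite sets of ordered pairs (e, e′) of distinct elements of E such that every element of E occurs in at most one pair of L ∪ Q (counting both coordinates, and no element occurs in two different pairs). Define Δ = { l : E → ℝ : l(e) ≥ 0 for all e, Σ_{e∈E} l(e) = 1, l(e) ≤ l(e′) for every (e, e′) ∈ L, and l(e) = l(e′) for every (e, e′) ∈ Q }. Let V be the following set of points of ℝ^E: the indicator functions χ_e for every e ∈ E occurring in no pair of L ∪ Q; the indicator functions χ_{e′} for every (e, e′) ∈ L; and the midpoints (χ_e + χ_{e′})/2 for every (e, e′) ∈ L ∪ Q. Then V is affinely independent, Δ equals the convex hull of V,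 and V has exactly |E| − |Q| elements; consequently Δ is a simplex of dimension |E| − 1 − |Q|. -/
/-- The indicator function `χ e` of `e : E`. -/
def chi {E : Type*} [DecidableEq E] (e : E) : E → ℝ := fun x => if x = e then 1 else 0

/-- The set `Δ` of nonnegative functions `l : E → ℝ` of total sum `1` with
`l e ≤ l e'` for `(e, e') ∈ L` and `l e = l e'` for `(e, e') ∈ Q`. -/
def simplexSet {E : Type*} [Fintype E] (L Q : Finset (E × E)) : Set (E → ℝ) :=
  {l | (∀ e, 0 ≤ l e) ∧ ∑ e, l e = 1 ∧
    (∀ p ∈ L, l p.1 ≤ l p.2) ∧ (∀ p ∈ Q, l p.1 = l p.2)}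

/-- The vertex set `V`: indicators of elements occurring in no pair of `L ∪ Q`,
indicators `χ e'` for `(e, e') ∈ L`, and midpoints `(χ e + χ e')/2` for
`(e, e') ∈ L ∪ Q`. -/
def vertexSet {E : Type*} [DecidableEq E] (L Q : Finset (E × E)) : Set (E → ℝ) :=
  (chi '' {e | ∀ p ∈ L ∪ Q, p.1 ≠ e ∧ p.2 ≠ e}) ∪
  ((fun p : E × E => chi p.2) '' (L : Set (E × E))) ∪
  ((fun p : E × E => (chi p.1 + chi p.2) / 2) '' ((L ∪ Q : Finset (E × E)) : Set (E × E)))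

namespace SimplexAux
variable {E : Type*} [Fintype E] [DecidableEq E]

lemma chi_apply (e x : E) : chi e x = if x = e then 1 else 0 := rfl

lemma chi_self (e : E) : chi e e = 1 := by simp [chi]

lemma chi_ne {e x : E} (h : x ≠ e) : chi e x = 0 := by simp [chi, h]

def freeFinset (L Q : Finset (E × E)) : Finset E :=
  Finset.univ.filter fun e => ∀ p ∈ L ∪ Q, p.1 ≠ e ∧ p.2 ≠ e

abbrev Idx (L Q : Finset (E × E)) :=
  (↥(freeFinset L Q)) ⊕ (↥L) ⊕ (↥(L ∪ Q))

noncomputable def pt (L Q : Finset (E × E)) : Idx L Q → (E → ℝ) :=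
  Sum.elim (fun e => chi (e : E))
    (Sum.elim (fun p => chi (p : E × E).2)
      (fun p => (chi (p : E × E).1 + chi (p : E × E).2) / 2))

noncomputable def proj' (e : E) : (E → ℝ) →ₗ[ℝ] ℝ := LinearMap.proj e

@[simp] lemma proj'_apply (e : E) (l : E → ℝ) : proj' e l = l e := rfl

noncomputable def phi (L Q : Finset (E × E)) : Idx L Q → ((E → ℝ) →ₗ[ℝ] ℝ) :=
  Sum.elim (fun e => proj' (e : E))
    (Sum.elim (fun p => proj' (p : E × E).2 - proj' (p : E × E).1)
      (fun p => (2 : ℝ) • proj' (p : E × E).1))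

section Delta
variable {L Q : Finset (E × E)}
  (hne : ∀ p ∈ L ∪ Q, p.1 ≠ p.2)
  (honce : ∀ p ∈ L ∪ Q, ∀ q ∈ L ∪ Q, p ≠ q →
    p.1 ≠ q.1 ∧ p.1 ≠ q.2 ∧ p.2 ≠ q.1 ∧ p.2 ≠ q.2)
  (hLQ : ∀ p ∈ L, ∀ q ∈ Q, p.1 ≠ q.1 ∧ p.1 ≠ q.2 ∧ p.2 ≠ q.1 ∧ p.2 ≠ q.2)

include hne honce hLQ in
lemma delta (i j : Idx L Q) : phi L Q i (pt L Q j) = if i = j then 1 else 0 := by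
  have hLsub : ∀ p ∈ L, p ∈ L ∪ Q := fun p hp => Finset.mem_union_left _ hp
  obtain ⟨e, he⟩ | ⟨p, hp⟩ | ⟨p, hp⟩ := i <;> obtain ⟨f, hf⟩ | ⟨q, hq⟩ | ⟨q, hq⟩ := j <;>
    simp only [phi, pt, Sum.elim_inl, Sum.elim_inr, LinearMap.sub_apply, LinearMap.smul_apply,
      proj'_apply, Sum.inl.injEq, Sum.inr.injEq, Subtype.mk.injEq, smul_eq_mul,
      Pi.add_apply, Pi.div_apply, Pi.ofNat_apply]
  · rcases eq_or_ne e f with rfl | hef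
    · simp [chi_self]
    · simp [chi_ne hef, hef]
  · simp only [freeFinset, Finset.mem_filter] at he
    exact chi_ne (Ne.symm (he.2 q (hLsub q hq)).2)
  · simp only [freeFinset, Finset.mem_filter] at he
    simp [chi_ne (Ne.symm (he.2 q hq).1), chi_ne (Ne.symm (he.2 q hq).2)]
  · simp only [freeFinset, Finset.mem_filter] at hf
    simp [chi_ne (hf.2 p (hLsub p hp)).2, chi_ne (hf.2 p (hLsub p hp)).1]
  · rcases eq_or_ne p q with rfl | hpq
    · simp [chi_self, chi_ne (hne p (hLsub p hp))]
    · have h := honce p (hLsub p hp) q (hLsub q hq) hpq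
      simp [chi_ne h.2.2.2, chi_ne h.2.1, hpq]
  · rcases eq_or_ne p q with rfl | hpq
    · have h := hne p (hLsub p hp)
      simp [chi_self, chi_ne h, chi_ne (Ne.symm h)]
    · have h := honce p (hLsub p hp) q hq hpq
      simp [chi_ne h.1, chi_ne h.2.1, chi_ne h.2.2.1, chi_ne h.2.2.2, hpq]
  · simp only [freeFinset, Finset.mem_filter] at hf
    simp [chi_ne (hf.2 p hp).1]
  · have hq1 : p.1 ≠ q.2 := by
      rcases eq_or_ne p q with rfl | hpq
      · exact hne p hp
      · exact (honce p hp q (hLsub q hq) hpq).2.1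
    exact mul_eq_zero_of_right _ (chi_ne hq1)
  · rcases eq_or_ne p q with rfl | hpq
    · simp [chi_self, chi_ne (hne p hp)]
    · have h := honce p hp q hq hpq
      simp [chi_ne h.1, chi_ne h.2.1, hpq]

end Delta

lemma range_pt (L Q : Finset (E × E)) : Set.range (pt L Q) = vertexSet L Q := by
  ext v
  simp only [vertexSet, Set.mem_union, Set.mem_image, Set.mem_setOf_eq, Finset.mem_coe,
    Set.mem_range]
  constructor
  · rintro ⟨(⟨e, he⟩ | ⟨p, hp⟩ | ⟨p, hp⟩), rfl⟩
    · exact Or.inl (Or.inl ⟨e, by simpa [freeFinset] using he, rfl⟩)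
    · exact Or.inl (Or.inr ⟨p, hp, rfl⟩)
    · exact Or.inr ⟨p, hp, rfl⟩
  · rintro ((⟨e, he, rfl⟩ | ⟨p, hp, rfl⟩) | ⟨p, hp, rfl⟩)
    · exact ⟨Sum.inl ⟨e, by simpa [freeFinset] using he⟩, rfl⟩
    · exact ⟨Sum.inr (Sum.inl ⟨p, hp⟩), rfl⟩
    · exact ⟨Sum.inr (Sum.inr ⟨p, hp⟩), rfl⟩

lemma convex_simplexSet (L Q : Finset (E × E)) : Convex ℝ (simplexSet L Q) := by
  intro x hx y hy a b ha hb hab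
  obtain ⟨hx0, hx1, hxL, hxQ⟩ := hx
  obtain ⟨hy0, hy1, hyL, hyQ⟩ := hy
  refine ⟨fun e => add_nonneg (mul_nonneg ha (hx0 e)) (mul_nonneg hb (hy0 e)), ?_, ?_, ?_⟩
  · simp only [Pi.add_apply, Pi.smul_apply, smul_eq_mul, Finset.sum_add_distrib,
      ← Finset.mul_sum, hx1, hy1, mul_one]
    exact hab
  · intro p hp
    simp only [Pi.add_apply, Pi.smul_apply, smul_eq_mul]
    exact add_le_add (mul_le_mul_of_nonneg_left (hxL p hp) ha)
      (mul_le_mul_of_nonneg_left (hyL p hp) hb)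
  · intro p hp
    simp only [Pi.add_apply, Pi.smul_apply, smul_eq_mul, hxQ p hp, hyQ p hp]

lemma chi_nonneg (e x : E) : 0 ≤ chi e x := by unfold chi; positivity

lemma sum_chi (e : E) : ∑ x, chi e x = 1 := by simp [chi, Finset.sum_ite_eq]

section Sub
variable {L Q : Finset (E × E)}
  (hne : ∀ p ∈ L ∪ Q, p.1 ≠ p.2)
  (honce : ∀ p ∈ L ∪ Q, ∀ q ∈ L ∪ Q, p ≠ q →
    p.1 ≠ q.1 ∧ p.1 ≠ q.2 ∧ p.2 ≠ q.1 ∧ p.2 ≠ q.2)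
  (hLQ : ∀ p ∈ L, ∀ q ∈ Q, p.1 ≠ q.1 ∧ p.1 ≠ q.2 ∧ p.2 ≠ q.1 ∧ p.2 ≠ q.2)

include hne honce hLQ in
lemma vertex_subset : vertexSet L Q ⊆ simplexSet L Q := by
  intro v hv
  simp only [vertexSet, Set.mem_union, Set.mem_image, Set.mem_setOf_eq, Finset.mem_coe] at hv
  obtain (⟨e, he, rfl⟩ | ⟨p, hp, rfl⟩) | ⟨p, hp, rfl⟩ := hv
  · refine ⟨chi_nonneg e, sum_chi e, ?_, ?_⟩
    · intro q hq
      rw [chi_ne (he q (Finset.mem_union_left _ hq)).1]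
      exact chi_nonneg e q.2
    · intro q hq
      rw [chi_ne (he q (Finset.mem_union_right _ hq)).1,
          chi_ne (he q (Finset.mem_union_right _ hq)).2]
  · refine ⟨chi_nonneg p.2, sum_chi p.2, ?_, ?_⟩
    · intro q hq
      rcases eq_or_ne q p with rfl | hqp
      · rw [chi_ne (hne q (Finset.mem_union_left _ hq)), chi_self]
        norm_num
      · have h := honce q (Finset.mem_union_left _ hq) p (Finset.mem_union_left _ hp) hqp
        rw [chi_ne h.2.1, chi_ne h.2.2.2]
    · intro q hq
      have h := hLQ p hp q hq
      rw [chi_ne (Ne.symm h.2.2.1), chi_ne (Ne.symm h.2.2.2)]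
  · have hval : ∀ x, ((chi p.1 + chi p.2) / 2) x = (chi p.1 x + chi p.2 x) / 2 := fun x => rfl
    refine ⟨fun x => by rw [hval]; exact div_nonneg (add_nonneg (chi_nonneg _ _) (chi_nonneg _ _)) (by norm_num), ?_, ?_, ?_⟩
    · simp only [hval]
      rw [← Finset.sum_div, Finset.sum_add_distrib, sum_chi, sum_chi]
      norm_num
    · intro q hq
      rw [hval, hval]
      rcases eq_or_ne p q with rfl | hpq
      · rw [chi_self, chi_ne (hne p hp), chi_ne (Ne.symm (hne p hp)), chi_self]
        norm_num
      · have h := honce p hp q (Finset.mem_union_left _ hq) hpq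
        rw [chi_ne (Ne.symm h.1), chi_ne (Ne.symm h.2.2.1), chi_ne (Ne.symm h.2.1),
          chi_ne (Ne.symm h.2.2.2)]
    · intro q hq
      rw [hval, hval]
      rcases eq_or_ne p q with rfl | hpq
      · rw [chi_self, chi_ne (hne p hp), chi_ne (Ne.symm (hne p hp)), chi_self]
        norm_num
      · have h := honce p hp q (Finset.mem_union_right _ hq) hpq
        rw [chi_ne (Ne.symm h.1), chi_ne (Ne.symm h.2.2.1), chi_ne (Ne.symm h.2.1),
          chi_ne (Ne.symm h.2.2.2)]

end Sub
section Count
variable {L Q : Finset (E × E)}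

lemma card_pairUnion (hne : ∀ p ∈ L ∪ Q, p.1 ≠ p.2)
    (honce : ∀ p ∈ L ∪ Q, ∀ q ∈ L ∪ Q, p ≠ q →
      p.1 ≠ q.1 ∧ p.1 ≠ q.2 ∧ p.2 ≠ q.1 ∧ p.2 ≠ q.2) :
    ((L ∪ Q).biUnion fun p => ({p.1, p.2} : Finset E)).card = 2 * (L ∪ Q).card := by
  rw [Finset.card_biUnion]
  · rw [Finset.sum_congr rfl fun p hp => Finset.card_pair (hne p hp)]
    rw [Finset.sum_const, smul_eq_mul, mul_comm]
  · intro p hp q hq hpq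
    have h := honce p hp q hq hpq
    rw [Function.onFun, Finset.disjoint_left]
    intro x hx1 hx2
    simp only [Finset.mem_insert, Finset.mem_singleton] at hx1 hx2
    rcases hx1 with rfl | rfl <;> rcases hx2 with h2 | h2
    exacts [h.1 h2, h.2.1 h2, h.2.2.1 h2, h.2.2.2 h2]

lemma freeFinset_eq_compl :
    freeFinset L Q = ((L ∪ Q).biUnion fun p => ({p.1, p.2} : Finset E))ᶜ := by
  ext e
  simp only [freeFinset, Finset.mem_filter, Finset.mem_univ, true_and, Finset.mem_compl,
    Finset.mem_biUnion, Finset.mem_insert, Finset.mem_singleton]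
  push_neg
  constructor
  · intro h p hp
    exact ⟨Ne.symm (h p hp).1, Ne.symm (h p hp).2⟩
  · intro h p hp
    exact ⟨Ne.symm (h p hp).1, Ne.symm (h p hp).2⟩

end Count
end SimplexAux

set_option maxHeartbeats 1000000 in
/-- `Δ` is the convex hull of the affinely independent set `V`, which has
`|E| − |Q|` elements; hence `Δ` is a simplex of dimension `|E| − 1 − |Q|`. -/
theorem simplexSet_is_simplex {E : Type*} [Fintype E] [DecidableEq E] [Nonempty E]
    (L Q : Finset (E × E))
    (hne : ∀ p ∈ L ∪ Q, p.1 ≠ p.2)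
    (honce : ∀ p ∈ L ∪ Q, ∀ q ∈ L ∪ Q, p ≠ q →
      p.1 ≠ q.1 ∧ p.1 ≠ q.2 ∧ p.2 ≠ q.1 ∧ p.2 ≠ q.2)
    (hLQ : ∀ p ∈ L, ∀ q ∈ Q, p.1 ≠ q.1 ∧ p.1 ≠ q.2 ∧ p.2 ≠ q.1 ∧ p.2 ≠ q.2) :
    AffineIndependent ℝ ((↑) : vertexSet L Q → (E → ℝ)) ∧
    simplexSet L Q = convexHull ℝ (vertexSet L Q) ∧
    (vertexSet L Q).ncard = Fintype.card E - Q.card := by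
  classical
  have hdelta := SimplexAux.delta hne honce hLQ
  have hdLQ : Disjoint L Q := Finset.disjoint_left.2 fun p hp hq => (hLQ p hp p hq).1 rfl
  have hinj : Function.Injective (SimplexAux.pt L Q) := by
    intro i j hij
    by_contra hij'
    have h1 := hdelta i i
    have h2 := hdelta i j
    rw [if_pos rfl, hij] at h1
    rw [if_neg hij', h1] at h2
    norm_num at h2
  have haff : AffineIndependent ℝ (SimplexAux.pt L Q) := by
    rw [affineIndependent_iff]
    intro s wts _ hsum i hi
    have h0 := congrArg (SimplexAux.phi L Q i) hsum
    rw [map_sum, map_zero] at h0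
    have h1 : ∑ j ∈ s, (if i = j then wts j else 0) = 0 := by
      have hcg : ∀ j ∈ s, (SimplexAux.phi L Q i) (wts j • SimplexAux.pt L Q j) =
          (if i = j then wts j else 0) := by
        intro j hj
        rw [map_smul, hdelta i j, smul_eq_mul]
        by_cases h : i = j <;> simp [h]
      rw [Finset.sum_congr rfl hcg] at h0
      exact h0
    rwa [Finset.sum_ite_eq, if_pos hi] at h1
  refine ⟨?_, ?_, ?_⟩
  · rw [← SimplexAux.range_pt]
    exact haff.range
  · refine Set.Subset.antisymm ?_
      (convexHull_min (SimplexAux.vertex_subset hne honce hLQ) (SimplexAux.convex_simplexSet L Q))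
    intro l hl
    obtain ⟨h0, h1, hL, hQ⟩ := hl
    set w : SimplexAux.Idx L Q → ℝ :=
      Sum.elim (fun e => l (e : E)) (Sum.elim (fun p => l (p : E × E).2 - l (p : E × E).1)
        (fun p => 2 * l (p : E × E).1)) with hw
    have hw0 : ∀ i, 0 ≤ w i := by
      rintro (⟨e, he⟩ | ⟨p, hp⟩ | ⟨p, hp⟩)
      · exact h0 e
      · exact sub_nonneg.2 (hL p hp)
      · exact mul_nonneg (by norm_num) (h0 _)
    have hsplit : ∀ f : E → ℝ, ∀ g1 g2 : E × E → ℝ,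
        ∑ i : SimplexAux.Idx L Q, Sum.elim (fun e : ↥(SimplexAux.freeFinset L Q) => f ↑e)
          (Sum.elim (fun p : ↥L => g1 ↑p) (fun p : ↥(L ∪ Q) => g2 ↑p)) i =
        ∑ e ∈ SimplexAux.freeFinset L Q, f e + (∑ p ∈ L, g1 p + ∑ p ∈ L ∪ Q, g2 p) := by
      intro f g1 g2
      rw [Fintype.sum_sum_type, Fintype.sum_sum_type]
      simp only [Sum.elim_inl, Sum.elim_inr]
      rw [Finset.sum_coe_sort (SimplexAux.freeFinset L Q) f, Finset.sum_coe_sort L g1,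
        Finset.sum_coe_sort (L ∪ Q) g2]
    have key1 : ∑ p ∈ L ∪ Q, 2 * l p.1 = ∑ p ∈ L, 2 * l p.1 + ∑ p ∈ Q, 2 * l p.1 :=
      Finset.sum_union hdLQ
    have key2 : ∑ p ∈ Q, 2 * l p.1 = ∑ p ∈ Q, (l p.1 + l p.2) :=
      Finset.sum_congr rfl fun p hp => by rw [← hQ p hp]; ring
    have key3 : ∑ p ∈ L, (l p.2 - l p.1) + ∑ p ∈ L, 2 * l p.1 = ∑ p ∈ L, (l p.1 + l p.2) := by
      rw [← Finset.sum_add_distrib]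
      exact Finset.sum_congr rfl fun p _ => by ring
    have key4 : ∑ e ∈ (L ∪ Q).biUnion (fun p => ({p.1, p.2} : Finset E)), l e =
        ∑ p ∈ L ∪ Q, (l p.1 + l p.2) := by
      rw [Finset.sum_biUnion]
      · exact Finset.sum_congr rfl fun p hp => Finset.sum_pair (hne p hp)
      · intro p hp q hq hpq
        have h := honce p (Finset.mem_coe.1 hp) q (Finset.mem_coe.1 hq) hpq
        simp only [Function.onFun]
        rw [Finset.disjoint_left]
        intro x hx1 hx2
        simp only [Finset.mem_insert, Finset.mem_singleton] at hx1 hx2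
        rcases hx1 with rfl | rfl <;> rcases hx2 with h2 | h2
        exacts [h.1 h2, h.2.1 h2, h.2.2.1 h2, h.2.2.2 h2]
    have key5 : ∑ p ∈ L ∪ Q, (l p.1 + l p.2) =
        ∑ p ∈ L, (l p.1 + l p.2) + ∑ p ∈ Q, (l p.1 + l p.2) := Finset.sum_union hdLQ
    have key6 : ∑ e ∈ SimplexAux.freeFinset L Q, l e +
        ∑ e ∈ (L ∪ Q).biUnion (fun p => ({p.1, p.2} : Finset E)), l e = 1 := by
      rw [SimplexAux.freeFinset_eq_compl, Finset.sum_compl_add_sum]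
      exact h1
    have hb : ∑ i, w i = 1 := by
      have h' : ∑ i, w i = ∑ e ∈ SimplexAux.freeFinset L Q, l e +
          (∑ p ∈ L, (l p.2 - l p.1) + ∑ p ∈ L ∪ Q, 2 * l p.1) := by
        rw [hw]
        exact hsplit l (fun p => l p.2 - l p.1) (fun p => 2 * l p.1)
      rw [h']
      linarith
    have hc : ∑ i, w i • SimplexAux.pt L Q i = l := by
      funext x
      have hterm : ∀ i, (w i • SimplexAux.pt L Q i) x =
          Sum.elim (fun e : ↥(SimplexAux.freeFinset L Q) => l ↑e * chi (↑e : E) x)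
            (Sum.elim (fun p : ↥L => (l (↑p : E × E).2 - l (↑p : E × E).1) * chi (↑p : E × E).2 x)
              (fun p : ↥(L ∪ Q) => 2 * l (↑p : E × E).1 *
                ((chi (↑p : E × E).1 x + chi (↑p : E × E).2 x) / 2))) i := by
        rintro (⟨e, he⟩ | ⟨p, hp⟩ | ⟨p, hp⟩) <;> rw [hw] <;> rfl
      have hx2 : (∑ i, w i • SimplexAux.pt L Q i) x =
          ∑ e ∈ SimplexAux.freeFinset L Q, l e * chi e x +
          (∑ p ∈ L, (l p.2 - l p.1) * chi p.2 x +
           ∑ p ∈ L ∪ Q, 2 * l p.1 * ((chi p.1 x + chi p.2 x) / 2)) := by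
        rw [Finset.sum_apply, Finset.sum_congr rfl fun i _ => hterm i]
        exact hsplit (fun e => l e * chi e x) (fun p => (l p.2 - l p.1) * chi p.2 x)
          (fun p => 2 * l p.1 * ((chi p.1 x + chi p.2 x) / 2))
      rw [hx2]
      have S1 : ∑ e ∈ SimplexAux.freeFinset L Q, l e * chi e x =
          if x ∈ SimplexAux.freeFinset L Q then l x else 0 := by
        rw [← Finset.sum_ite_eq (SimplexAux.freeFinset L Q) x l]
        refine Finset.sum_congr rfl fun e _ => ?_
        rw [SimplexAux.chi_apply]
        split <;> ring
      by_cases hxf : x ∈ SimplexAux.freeFinset L Q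
      · have hxfree : ∀ p ∈ L ∪ Q, p.1 ≠ x ∧ p.2 ≠ x := (Finset.mem_filter.1 hxf).2
        have S2 : ∑ p ∈ L, (l p.2 - l p.1) * chi p.2 x = 0 :=
          Finset.sum_eq_zero fun p hp => by
            rw [SimplexAux.chi_ne (Ne.symm (hxfree p (Finset.mem_union_left _ hp)).2), mul_zero]
        have S3 : ∑ p ∈ L ∪ Q, 2 * l p.1 * ((chi p.1 x + chi p.2 x) / 2) = 0 :=
          Finset.sum_eq_zero fun p hp => by
            rw [SimplexAux.chi_ne (Ne.symm (hxfree p hp).1),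
              SimplexAux.chi_ne (Ne.symm (hxfree p hp).2)]
            ring
        rw [S1, S2, S3, if_pos hxf]
        ring
      · have hex : ∃ q ∈ L ∪ Q, q.1 = x ∨ q.2 = x := by
          by_contra hcon
          push_neg at hcon
          exact hxf (Finset.mem_filter.2 ⟨Finset.mem_univ x,
            fun p hp => ⟨(hcon p hp).1, (hcon p hp).2⟩⟩)
        obtain ⟨q, hq, hcase⟩ := hex
        rw [S1, if_neg hxf]
        rcases hcase with hx1 | hx2
        · subst hx1
          have S2 : ∑ p ∈ L, (l p.2 - l p.1) * chi p.2 q.1 = 0 :=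
            Finset.sum_eq_zero fun p hp => by
              rcases eq_or_ne p q with rfl | hpq
              · rw [SimplexAux.chi_ne (hne p (Finset.mem_union_left _ hp)), mul_zero]
              · rw [SimplexAux.chi_ne
                  (honce q hq p (Finset.mem_union_left _ hp) (Ne.symm hpq)).2.1, mul_zero]
          have S3 : ∑ p ∈ L ∪ Q, 2 * l p.1 * ((chi p.1 q.1 + chi p.2 q.1) / 2) = l q.1 := by
            rw [Finset.sum_eq_single_of_mem q hq]
            · rw [SimplexAux.chi_self, SimplexAux.chi_ne (hne q hq)]
              ring
            · intro p hp hpq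
              have h := honce q hq p hp (Ne.symm hpq)
              rw [SimplexAux.chi_ne h.1, SimplexAux.chi_ne h.2.1]
              ring
          rw [S2, S3]
          ring
        · subst hx2
          have S3 : ∑ p ∈ L ∪ Q, 2 * l p.1 * ((chi p.1 q.2 + chi p.2 q.2) / 2) = l q.1 := by
            rw [Finset.sum_eq_single_of_mem q hq]
            · rw [SimplexAux.chi_self, SimplexAux.chi_ne (Ne.symm (hne q hq))]
              ring
            · intro p hp hpq
              have h := honce q hq p hp (Ne.symm hpq)
              rw [SimplexAux.chi_ne h.2.2.1, SimplexAux.chi_ne h.2.2.2]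
              ring
          rcases Finset.mem_union.1 hq with hqL | hqQ
          · have S2 : ∑ p ∈ L, (l p.2 - l p.1) * chi p.2 q.2 = l q.2 - l q.1 := by
              rw [Finset.sum_eq_single_of_mem q hqL]
              · rw [SimplexAux.chi_self, mul_one]
              · intro p hp hpq
                have h := honce q hq p (Finset.mem_union_left _ hp) (Ne.symm hpq)
                rw [SimplexAux.chi_ne h.2.2.2, mul_zero]
            rw [S2, S3]
            ring
          · have S2 : ∑ p ∈ L, (l p.2 - l p.1) * chi p.2 q.2 = 0 :=
              Finset.sum_eq_zero fun p hp => by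
                rw [SimplexAux.chi_ne (Ne.symm (hLQ p hp q hqQ).2.2.2), mul_zero]
            rw [S2, S3, hQ q hqQ]
            ring
    have hptmem : ∀ i ∈ Finset.univ (α := SimplexAux.Idx L Q),
        SimplexAux.pt L Q i ∈ vertexSet L Q := by
      intro i _
      rw [← SimplexAux.range_pt]
      exact Set.mem_range_self i
    have hcm := Finset.centerMass_mem_convexHull (Finset.univ (α := SimplexAux.Idx L Q))
      (fun i _ => hw0 i) (by rw [hb]; norm_num) hptmem
    rwa [Finset.centerMass, hb, inv_one, one_smul, hc] at hcm
  · have hcard : (vertexSet L Q).ncard = Fintype.card (SimplexAux.Idx L Q) := by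
      rw [← SimplexAux.range_pt, ← Set.image_univ, Set.ncard_image_of_injective _ hinj,
        Set.ncard_univ, Nat.card_eq_fintype_card]
    have hle2 : 2 * (L.card + Q.card) ≤ Fintype.card E := by
      rw [← Finset.card_union_of_disjoint hdLQ, ← SimplexAux.card_pairUnion hne honce]
      exact Finset.card_le_univ _
    rw [hcard, Fintype.card_sum, Fintype.card_sum, Fintype.card_coe, Fintype.card_coe,
      Fintype.card_coe, SimplexAux.freeFinset_eq_compl, Finset.card_compl,
      SimplexAux.card_pairUnion hne honce, Finset.card_union_of_disjoint hdLQ]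
    omega
end

section
/- Let E be a nonempty finite set. Let L and Q be two finite sets of ordered pairs (e, e′) of distinct elements of E such that every element of E occurs in at most one pair of L ∪ Q (counting both coordinates, and no element occurs in two different pairs). Define Δ = { l : E → ℝ : l(e) ≥ 0 for all e, Σ_{e∈E} l(e) = 1, l(e) ≤ l(e′) for every (e, e′) ∈ L, and l(e) = l(e′) for every (e, e′) ∈ Q }. Then a point l ∈ Δ lies in the relative interior (intrinsic interior) of Δ if and only if l(e) > 0 for every e ∈ E, and l(e) < l(e′) for every (e, e′) ∈ L. -/
section Aux

variable {E : Type*} [Fintype E] [DecidableEq E] [Nonempty E]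

/-- The ambient affine subspace: sum one and the `Q`-equalities. -/
noncomputable def simplexAff (Q : Finset (E × E)) : AffineSubspace ℝ (E → ℝ) where
  carrier := {l | ∑ e, l e = 1 ∧ ∀ p ∈ Q, l p.1 = l p.2}
  smul_vsub_vadd_mem' := by
    rintro c p1 p2 p3 ⟨h1, h1'⟩ ⟨h2, h2'⟩ ⟨h3, h3'⟩
    constructor
    · simp only [vsub_eq_sub, vadd_eq_add, Pi.add_apply, Pi.smul_apply, Pi.sub_apply,
        smul_eq_mul, Finset.sum_add_distrib, ← Finset.mul_sum, Finset.sum_sub_distrib,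
        h1, h2, h3]
      ring
    · intro p hp
      simp only [vsub_eq_sub, vadd_eq_add, Pi.add_apply, Pi.smul_apply, Pi.sub_apply,
        smul_eq_mul, h1' p hp, h2' p hp, h3' p hp]

lemma ball_subset_simplexSet (L Q : Finset (E × E)) (l : E → ℝ)
    (h1 : ∀ e, 0 < l e) (h2 : ∀ p ∈ L, l p.1 < l p.2) :
    ∃ ε > 0, ∀ x : E → ℝ, (∑ e, x e = 1) → (∀ p ∈ Q, x p.1 = x p.2) →
      dist x l < ε → x ∈ simplexSet L Q := by
  classical
  set F : Finset ℝ := (Finset.univ.image l) ∪ (L.image fun p => (l p.2 - l p.1) / 2) with hF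
  have hFne : F.Nonempty := by
    refine Finset.Nonempty.mono Finset.subset_union_left ?_
    exact (Finset.univ_nonempty).image l
  refine ⟨F.min' hFne, ?_, ?_⟩
  · have hmem : F.min' hFne ∈ (Finset.univ.image l) ∪ (L.image fun p => (l p.2 - l p.1) / 2) :=
      F.min'_mem hFne
    rw [Finset.mem_union] at hmem
    rcases hmem with hm | hm
    · obtain ⟨e, -, he⟩ := Finset.mem_image.mp hm
      rw [← he]; exact h1 e
    · obtain ⟨p, hp, he⟩ := Finset.mem_image.mp hm
      rw [← he]; linarith [h2 p hp]
  · intro x hsum hQ hdist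
    have hle : ∀ e, F.min' hFne ≤ l e := fun e =>
      F.min'_le _ (Finset.mem_union_left _ (Finset.mem_image_of_mem l (Finset.mem_univ e)))
    have hleL : ∀ p ∈ L, F.min' hFne ≤ (l p.2 - l p.1) / 2 := fun p hp =>
      F.min'_le _ (Finset.mem_union_right _ (Finset.mem_image_of_mem _ hp))
    have key : ∀ e, |x e - l e| < F.min' hFne := by
      intro e
      have := dist_le_pi_dist x l e
      rw [Real.dist_eq] at this
      linarith
    refine ⟨fun e => ?_, hsum, fun p hp => ?_, hQ⟩
    · have := abs_lt.mp (key e)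
      linarith [hle e]
    · have ha := abs_lt.mp (key p.1)
      have hb := abs_lt.mp (key p.2)
      have := hleL p hp
      linarith

lemma exists_strict_point (L Q : Finset (E × E))
    (hne : ∀ p ∈ L ∪ Q, p.1 ≠ p.2)
    (honce : ∀ p ∈ L ∪ Q, ∀ q ∈ L ∪ Q, p ≠ q →
      p.1 ≠ q.1 ∧ p.1 ≠ q.2 ∧ p.2 ≠ q.1 ∧ p.2 ≠ q.2)
    (hLQ : ∀ p ∈ L, ∀ q ∈ Q, p.1 ≠ q.1 ∧ p.1 ≠ q.2 ∧ p.2 ≠ q.1 ∧ p.2 ≠ q.2) :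
    ∃ m ∈ simplexSet L Q, (∀ e, 0 < m e) ∧ ∀ p ∈ L, m p.1 < m p.2 := by
  classical
  set w : E → ℝ := fun e => if e ∈ L.image Prod.snd then 2 else 1 with hw
  have hwpos : ∀ e, 0 < w e := by
    intro e; rw [hw]; dsimp only; split <;> norm_num
  set S : ℝ := ∑ e, w e with hS
  have hSpos : 0 < S :=
    Finset.sum_pos (fun e _ => hwpos e) Finset.univ_nonempty
  refine ⟨fun e => w e / S, ⟨fun e => (div_pos (hwpos e) hSpos).le, ?_, ?_, ?_⟩,
    fun e => div_pos (hwpos e) hSpos, ?_⟩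
  · rw [← Finset.sum_div, ← hS, div_self hSpos.ne']
  · -- L inequalities
    intro p hp
    have h1 : w p.1 = 1 := by
      rw [hw]; dsimp only
      rw [if_neg]
      intro hmem
      obtain ⟨q, hq, hq2⟩ := Finset.mem_image.mp hmem
      by_cases hpq : p = q
      · subst hpq
        exact hne p (Finset.mem_union_left _ hp) hq2.symm
      · exact (honce p (Finset.mem_union_left _ hp) q (Finset.mem_union_left _ hq)
          hpq).2.1 hq2.symm
    have h2 : w p.2 = 2 := by
      rw [hw]; dsimp only
      rw [if_pos (Finset.mem_image.mpr ⟨p, hp, rfl⟩)]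
    show w p.1 / S ≤ w p.2 / S
    rw [h1, h2, div_le_div_iff₀ hSpos hSpos]
    nlinarith
  · -- Q equalities
    intro p hp
    have key : ∀ a, (∀ q ∈ L, q.2 ≠ a) → w a = 1 := by
      intro a ha
      rw [hw]; dsimp only
      rw [if_neg]
      intro hmem
      obtain ⟨q, hq, hq2⟩ := Finset.mem_image.mp hmem
      exact ha q hq hq2
    show w p.1 / S = w p.2 / S
    rw [key p.1 (fun q hq => (hLQ q hq p hp).2.2.1),
      key p.2 (fun q hq => (hLQ q hq p hp).2.2.2)]
  · -- strict L inequalities (again, for the conclusion)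
    intro p hp
    have h1 : w p.1 = 1 := by
      rw [hw]; dsimp only
      rw [if_neg]
      intro hmem
      obtain ⟨q, hq, hq2⟩ := Finset.mem_image.mp hmem
      by_cases hpq : p = q
      · subst hpq
        exact hne p (Finset.mem_union_left _ hp) hq2.symm
      · exact (honce p (Finset.mem_union_left _ hp) q (Finset.mem_union_left _ hq)
          hpq).2.1 hq2.symm
    have h2 : w p.2 = 2 := by
      rw [hw]; dsimp only
      rw [if_pos (Finset.mem_image.mpr ⟨p, hp, rfl⟩)]
    show w p.1 / S < w p.2 / S
    rw [h1, h2, div_lt_div_iff₀ hSpos hSpos]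
    nlinarith

lemma affineSpan_simplexSet (L Q : Finset (E × E))
    (m : E → ℝ) (hm : m ∈ simplexSet L Q)
    (hm1 : ∀ e, 0 < m e) (hm2 : ∀ p ∈ L, m p.1 < m p.2) :
    affineSpan ℝ (simplexSet L Q) = simplexAff Q := by
  apply le_antisymm
  · rw [affineSpan_le]
    intro x hx
    exact ⟨hx.2.1, hx.2.2.2⟩
  · intro a ha
    obtain ⟨hasum, haQ⟩ := ha
    obtain ⟨ε, hε, hball⟩ := ball_subset_simplexSet L Q m hm1 hm2
    set t : ℝ := ε / (2 * (dist a m + 1)) with ht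
    have hd : 0 ≤ dist a m := dist_nonneg
    have htpos : 0 < t := by
      apply div_pos hε; positivity
    set x : E → ℝ := fun e => t * (a e - m e) + m e with hx
    have hxA : x ∈ simplexSet L Q := by
      apply hball
      · rw [hx]
        simp only [Finset.sum_add_distrib, Finset.sum_sub_distrib, ← Finset.mul_sum,
          hasum, hm.2.1]
        ring
      · intro p hp
        simp only [hx, haQ p hp, hm.2.2.2 p hp]
      · have : dist x m = t * dist a m := by
          rw [dist_eq_norm, dist_eq_norm]
          have : x - m = t • (a - m) := by
            funext e
            simp [hx, Pi.smul_apply, smul_eq_mul]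
          rw [this, norm_smul, Real.norm_eq_abs, abs_of_pos htpos]
        rw [this, ht]
        rw [div_mul_eq_mul_div, div_lt_iff₀ (by positivity)]
        nlinarith
    have hxspan : x ∈ affineSpan ℝ (simplexSet L Q) := subset_affineSpan ℝ _ hxA
    have hmspan : m ∈ affineSpan ℝ (simplexSet L Q) := subset_affineSpan ℝ _ hm
    have : t⁻¹ • (x -ᵥ m) +ᵥ m ∈ affineSpan ℝ (simplexSet L Q) :=
      AffineSubspace.smul_vsub_vadd_mem _ _ hxspan hmspan hmspan
    convert this using 1
    funext e
    simp only [vsub_eq_sub, vadd_eq_add, Pi.add_apply, Pi.smul_apply, Pi.sub_apply,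
      smul_eq_mul, hx]
    field_simp
    ring

end Aux

/-- A point `l ∈ Δ` lies in the relative (intrinsic) interior of `Δ` iff
`l e > 0` for all `e` and `l e < l e'` for every `(e, e') ∈ L`. -/
theorem mem_intrinsicInterior_simplexSet_iff
    {E : Type*} [Fintype E] [DecidableEq E] [Nonempty E]
    (L Q : Finset (E × E))
    (hne : ∀ p ∈ L ∪ Q, p.1 ≠ p.2)
    (honce : ∀ p ∈ L ∪ Q, ∀ q ∈ L ∪ Q, p ≠ q →
      p.1 ≠ q.1 ∧ p.1 ≠ q.2 ∧ p.2 ≠ q.1 ∧ p.2 ≠ q.2)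
    (hLQ : ∀ p ∈ L, ∀ q ∈ Q, p.1 ≠ q.1 ∧ p.1 ≠ q.2 ∧ p.2 ≠ q.1 ∧ p.2 ≠ q.2)
    (l : E → ℝ) (hl : l ∈ simplexSet L Q) :
    l ∈ intrinsicInterior ℝ (simplexSet L Q) ↔
      (∀ e, 0 < l e) ∧ (∀ p ∈ L, l p.1 < l p.2) := by
  classical
  obtain ⟨m, hm, hm1, hm2⟩ := exists_strict_point L Q hne honce hLQ
  have hspan := affineSpan_simplexSet L Q m hm hm1 hm2
  have hspanset : (affineSpan ℝ (simplexSet L Q) : Set (E → ℝ)) = (simplexAff Q : Set (E → ℝ)) := by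
    rw [hspan]
  constructor
  · rintro hmem
    rw [mem_intrinsicInterior] at hmem
    obtain ⟨y, hy, hyl⟩ := hmem
    rw [mem_interior_iff_mem_nhds, Metric.mem_nhds_iff] at hy
    obtain ⟨ε, hε, hball⟩ := hy
    have hd : 0 ≤ dist l m := dist_nonneg
    set t : ℝ := ε / (2 * (dist l m + 1)) with ht
    have htpos : 0 < t := by apply div_pos hε; positivity
    set x : E → ℝ := fun e => t * (l e - m e) + l e with hx
    have hxA : x ∈ (simplexAff Q : Set (E → ℝ)) := by
      constructor
      · simp only [hx, Finset.sum_add_distrib, Finset.sum_sub_distrib, ← Finset.mul_sum,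
          hl.2.1, hm.2.1]
        ring
      · intro p hp
        simp only [hx, hl.2.2.2 p hp, hm.2.2.2 p hp]
    have hxspan : x ∈ affineSpan ℝ (simplexSet L Q) := by
      rw [show (x ∈ affineSpan ℝ (simplexSet L Q)) ↔
        x ∈ (affineSpan ℝ (simplexSet L Q) : Set (E → ℝ)) from Iff.rfl, hspanset]
      exact hxA
    have hdistx : dist x l = t * dist l m := by
      rw [dist_eq_norm, dist_eq_norm]
      have : x - l = t • (l - m) := by
        funext e
        simp [hx, Pi.smul_apply, smul_eq_mul]
      rw [this, norm_smul, Real.norm_eq_abs, abs_of_pos htpos]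
    have hxball : (⟨x, hxspan⟩ : affineSpan ℝ (simplexSet L Q)) ∈ Metric.ball y ε := by
      rw [Metric.mem_ball, Subtype.dist_eq, hyl, hdistx, ht]
      rw [div_mul_eq_mul_div, div_lt_iff₀ (by positivity)]
      nlinarith
    have hxΔ : x ∈ simplexSet L Q := hball hxball
    constructor
    · intro e
      have h0 := hxΔ.1 e
      simp only [hx] at h0
      nlinarith [hm1 e]
    · intro p hp
      have h0 := hxΔ.2.2.1 p hp
      simp only [hx] at h0
      nlinarith [hm2 p hp]
  · rintro ⟨h1, h2⟩
    obtain ⟨ε, hε, hball⟩ := ball_subset_simplexSet L Q l h1 h2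
    have hlspan : l ∈ affineSpan ℝ (simplexSet L Q) := subset_affineSpan ℝ _ hl
    rw [mem_intrinsicInterior]
    refine ⟨⟨l, hlspan⟩, ?_, rfl⟩
    rw [mem_interior_iff_mem_nhds, Metric.mem_nhds_iff]
    refine ⟨ε, hε, ?_⟩
    rintro ⟨y, hyspan⟩ hy
    rw [Metric.mem_ball, Subtype.dist_eq] at hy
    have hyA : y ∈ (simplexAff Q : Set (E → ℝ)) := by
      rw [← hspanset]; exact hyspan
    exact hball y hyA.1 hyA.2 hy
end
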